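/- Let f : ℝⁿ → ℝ be convex with a local minimizer at x̄ and suppose there are c > 0, ε > 0, α ≥ 1 with m_f(x) ≥ c‖x - x̄‖^{α-1} for all 0 < ‖x - x̄‖ ≤ ε, where m_f(x) is the minimal norm of (convex) subgradients. Then there exist c' > 0 and ε' > 0 with f(x) ≥ f(x̄) + c'‖x - x̄‖^{α} for all ‖x - x̄‖ ≤ ε'. -/

import Mathlib

/-!
Convexity makes `x₀` a global minimizer. Given `x` at distance `r > 0` from `x₀` with gap
`Δ = f x - f x₀`, minimize the proximal function `f y + λ‖y - x‖²`, `λ = 4Δ/r²`, over the closed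
ball of radius `r` about `x`. Comparing with the value at `x` puts the minimizer `z` within `r/2`
of `x`, hence in the interior, and the first-order condition makes `2λ(x - z)` a subgradient at
`z` of norm at most `4Δ/r`. Since `‖z - x₀‖ ≥ r/2`, the hypothesis yields `c (r/2)^(α-1) ≤ 4Δ/r`,
that is `Δ ≥ c r^α / 2^(α+1)`.
-/

noncomputable section

/-- The convex subdifferential of `f` at `x`. -/
def convexSubdiff {n : ℕ} (f : EuclideanSpace ℝ (Fin n) → ℝ) (x : EuclideanSpace ℝ (Fin n)) :
    Set (EuclideanSpace ℝ (Fin n)) :=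
  {v | ∀ y, f x + (inner ℝ v (y - x) : ℝ) ≤ f y}

/-- Minimal norm of convex subgradients. -/
def mfConvex {n : ℕ} (f : EuclideanSpace ℝ (Fin n) → ℝ) (x : EuclideanSpace ℝ (Fin n)) : ℝ :=
  sInf (norm '' convexSubdiff f x)

open Set Filter Topology

theorem ConvexOn.sub_le_of_isLocalMin_add {E : Type*} [NormedAddCommGroup E] [NormedSpace ℝ E]
    {f ψ : E → ℝ} {ψ' : E →L[ℝ] ℝ} {z : E} (hf : ConvexOn ℝ univ f)
    (hψ : HasFDerivAt ψ ψ' z) (hmin : IsLocalMin (fun w => f w + ψ w) z) (y : E) :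
    f z - ψ' (y - z) ≤ f y := by
  set line : ℝ → E := fun t => z + t • (y - z)
  have hline0 : line 0 = z := by simp [line]
  have hline : HasDerivAt line (y - z) 0 := by
    simpa only [id, one_smul] using ((hasDerivAt_id (0 : ℝ)).smul_const (y - z)).const_add z
  have hslope := (hψ.comp_hasDerivAt_of_eq 0 hline hline0.symm).tendsto_slope_zero_right
  have hnear : ∀ᶠ t in 𝓝[>] (0 : ℝ), f z + ψ z ≤ f (line t) + ψ (line t) := by
    have hcont := hline.continuousAt.tendsto
    rw [hline0] at hcont
    exact nhdsWithin_le_nhds (hcont.eventually hmin)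
  have hsmall : ∀ᶠ t in 𝓝[>] (0 : ℝ), t < 1 := nhdsWithin_le_nhds (gt_mem_nhds one_pos)
  suffices ∀ᶠ t in 𝓝[>] (0 : ℝ), f z - f y ≤ t⁻¹ • ((ψ ∘ line) (0 + t) - (ψ ∘ line) 0) by
    linarith [ge_of_tendsto hslope this]
  filter_upwards [hnear, hsmall, self_mem_nhdsWithin] with t hnear ht1 (ht0 : 0 < t)
  have hconv : f (line t) ≤ (1 - t) * f z + t * f y := by
    have hpt : (1 - t) • z + t • y = line t := by
      simp only [line, smul_sub, sub_smul, one_smul]; abel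
    have := hf.2 (mem_univ z) (mem_univ y) (sub_nonneg.2 ht1.le) ht0.le (sub_add_cancel 1 t)
    rwa [hpt] at this
  rw [smul_eq_mul, le_inv_mul_iff₀ ht0, zero_add, Function.comp_apply, Function.comp_apply,
    hline0]
  nlinarith

open RealInnerProductSpace in
theorem ConvexOn.exists_subgradient_near {E : Type*} [NormedAddCommGroup E]
    [InnerProductSpace ℝ E] [FiniteDimensional ℝ E] {f : E → ℝ} {m : ℝ}
    (hf : ConvexOn ℝ univ f) (hm : ∀ y, m ≤ f y) (x : E) {r : ℝ} (hr : 0 < r) :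
    ∃ z v, ‖z - x‖ ≤ r / 2 ∧ ‖v‖ ≤ 4 * (f x - m) / r ∧ ∀ y, f z + ⟪v, y - z⟫ ≤ f y := by
  rcases (hm x).eq_or_lt with hx | hx
  · exact ⟨x, 0, by simp; positivity, by simp [← hx], fun y => by simpa [← hx] using hm y⟩
  set lam := 4 * (f x - m) / r ^ 2
  have hlam : 0 < lam := by have := sub_pos.2 hx; positivity
  have hlam_r : lam * r ^ 2 = 4 * (f x - m) := by simp only [lam]; field_simp
  have hcont : Continuous fun y => f y + lam * ‖y - x‖ ^ 2 := by
    have := continuousOn_univ.1 (hf.continuousOn isOpen_univ)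
    fun_prop
  obtain ⟨z, -, hzmin⟩ := (isCompact_closedBall x r).exists_isMinOn
    (Metric.nonempty_closedBall.2 hr.le) hcont.continuousOn
  have hzx : ‖z - x‖ ≤ r / 2 := by
    have hfx : f z + lam * ‖z - x‖ ^ 2 ≤ f x := by
      simpa using hzmin (Metric.mem_closedBall_self hr.le)
    have : lam * ‖z - x‖ ^ 2 ≤ lam * (r / 2) ^ 2 := by
      have : lam * (r / 2) ^ 2 = f x - m := by linear_combination hlam_r / 4
      linarith [hm z]
    exact (pow_le_pow_iff_left₀ (norm_nonneg _) (by positivity) two_ne_zero).1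
      (le_of_mul_le_mul_left this hlam)
  have hlocal : IsLocalMin (fun y => f y + lam * ‖y - x‖ ^ 2) z :=
    hzmin.isLocalMin <| Metric.closedBall_mem_nhds_of_mem
      (Metric.mem_ball.2 ((dist_eq_norm z x).symm ▸ hzx.trans_lt (half_lt_self hr)))
  have hderiv : HasFDerivAt (fun y => lam * ‖y - x‖ ^ 2) ((2 * lam) • innerSL ℝ (z - x)) z :=
    (((hasFDerivAt_id z).sub_const x).norm_sq.const_mul lam).congr_fderiv <| by
      ext w
      simp only [id_eq, map_sub, ContinuousLinearMap.comp_id, smul_apply, sub_apply,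
        coe_innerSL_apply, nsmul_eq_mul, Nat.cast_ofNat, smul_eq_mul]
      ring
  refine ⟨z, (2 * lam) • (x - z), hzx, ?_, fun y => ?_⟩
  · rw [norm_smul, Real.norm_of_nonneg (by positivity), norm_sub_rev]
    calc 2 * lam * ‖z - x‖ ≤ 2 * lam * (r / 2) := by gcongr
      _ = 4 * (f x - m) / r := by rw [← hlam_r]; field_simp
  · have hinner : ⟪(2 * lam) • (x - z), y - z⟫ = -((2 * lam) • innerSL ℝ (z - x)) (y - z) := by
      rw [← neg_sub z x, smul_neg, inner_neg_left, smul_apply, coe_innerSL_apply,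
        real_inner_smul_left, smul_eq_mul]
    linarith [hf.sub_le_of_isLocalMin_add hderiv hlocal y]

theorem mfConvex_le_norm {n : ℕ} {f : EuclideanSpace ℝ (Fin n) → ℝ}
    {x v : EuclideanSpace ℝ (Fin n)} (hv : v ∈ convexSubdiff f x) : mfConvex f x ≤ ‖v‖ :=
  csInf_le ⟨0, by rintro _ ⟨w, -, rfl⟩; exact norm_nonneg w⟩ ⟨v, hv, rfl⟩

theorem stmt17 {n : ℕ} (f : EuclideanSpace ℝ (Fin n) → ℝ)
    (hconv : ConvexOn ℝ Set.univ f)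
    (x₀ : EuclideanSpace ℝ (Fin n)) (hmin : IsLocalMin f x₀)
    (c ε α : ℝ) (hc : 0 < c) (hε : 0 < ε) (hα : 1 ≤ α)
    (h : ∀ x, 0 < ‖x - x₀‖ → ‖x - x₀‖ ≤ ε → mfConvex f x ≥ c * ‖x - x₀‖ ^ (α - 1)) :
    ∃ c' > (0:ℝ), ∃ ε' > (0:ℝ), ∀ x, ‖x - x₀‖ ≤ ε' →
      f x ≥ f x₀ + c' * ‖x - x₀‖ ^ α := by
  have hglob : ∀ y, f x₀ ≤ f y := IsMinOn.of_isLocalMin_of_convex_univ hmin hconv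
  refine ⟨c / 2 ^ (α + 1), by positivity, 2 * ε / 3, by positivity, fun x hx => ?_⟩
  rcases (norm_nonneg (x - x₀)).eq_or_lt with hr | hr
  · rw [← hr, Real.zero_rpow (by linarith), mul_zero, add_zero]
    exact hglob x
  set r := ‖x - x₀‖
  obtain ⟨z, v, hzx, hv, hsub⟩ := hconv.exists_subgradient_near hglob x hr
  have hzr : r / 2 ≤ ‖z - x₀‖ := by
    linarith [norm_sub_le_norm_sub_add_norm_sub x z x₀, norm_sub_rev x z]
  have hzε : ‖z - x₀‖ ≤ ε := by linarith [norm_sub_le_norm_sub_add_norm_sub z x x₀]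
  have hbound : c * (r / 2) ^ (α - 1) ≤ 4 * (f x - f x₀) / r :=
    calc c * (r / 2) ^ (α - 1) ≤ c * ‖z - x₀‖ ^ (α - 1) := by gcongr
      _ ≤ mfConvex f z := h z (by linarith) hzε
      _ ≤ ‖v‖ := mfConvex_le_norm hsub
      _ ≤ 4 * (f x - f x₀) / r := hv
  have hpow : c / 2 ^ (α + 1) * r ^ α = c * (r / 2) ^ (α - 1) * r / 4 := by
    rw [Real.div_rpow hr.le zero_le_two, Real.rpow_add two_pos, Real.rpow_sub hr,
      Real.rpow_sub two_pos, Real.rpow_one, Real.rpow_one]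
    field_simp
    ring
  rw [le_div_iff₀ hr] at hbound
  linarith
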